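/- arXiv:2212.06899 — 4 statements merged into one kernel-verified Lean document; each statement's English description precedes it below -/
import Mathlib

section
/- Let $N \geq 1$ and $\lambda \in \mathbb{Z}^N$ weakly decreasing. The product $\prod_{1 \leq i < j \leq N} \frac{\lambda_i - \lambda_j + j - i}{j-i}$ is a positive integer (i.e., the denominator product divides the numerator product and the quotient is at least 1). -/
/-!
With `v i = i - λ i`, the numerator of `hookProd` is the Vandermonde determinant of `v` and the
denominator is that of `i ↦ i`, namely the superfactorial `sf (N - 1)`. Since `λ` is antitone,
`v` is strictly increasing, so both determinants are positive, and the superfactorial divides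
every integer Vandermonde determinant of size `N`.
-/

/-- The hook-content product computing `dim S_λ(ℂ^N)`. -/
def hookProd (N : ℕ) (lam : Fin N → ℤ) : ℚ :=
  ∏ q ∈ Finset.univ.filter (fun q : Fin N × Fin N => q.1 < q.2),
    (((lam q.1 : ℚ) - (lam q.2 : ℚ) + ((q.2 : ℕ) : ℚ) - ((q.1 : ℕ) : ℚ)) /
      (((q.2 : ℕ) : ℚ) - ((q.1 : ℕ) : ℚ)))

open Finset Matrix

theorem Finset.prod_filter_lt_eq_prod_prod_Ioi {ι M : Type*} [Fintype ι] [LinearOrder ι]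
    [LocallyFiniteOrderTop ι] [CommMonoid M] (f : ι → ι → M) :
    ∏ q ∈ univ.filter (fun q : ι × ι => q.1 < q.2), f q.1 q.2 = ∏ i, ∏ j ∈ Ioi i, f i j := by
  rw [prod_sigma']
  exact prod_nbij' (fun q => ⟨q.1, q.2⟩) (fun p => (p.1, p.2)) (by simp) (by simp)
    (by simp) (by simp) (by simp)

theorem Matrix.det_vandermonde_pos {N : ℕ} {R : Type*} [CommRing R] [PartialOrder R]
    [IsStrictOrderedRing R] {v : Fin N → R} (hv : StrictMono v) :
    0 < (vandermonde v).det := by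
  rw [det_vandermonde]
  exact prod_pos fun _ _ => prod_pos fun _ hj => sub_pos.2 (hv (mem_Ioi.1 hj))

theorem Matrix.det_vandermonde_val_dvd_det_vandermonde {N : ℕ} (v : Fin N → ℤ) :
    (vandermonde fun i : Fin N => (i : ℤ)).det ∣ (vandermonde v).det := by
  cases N with
  | zero => simp
  | succ n =>
    rw [det_vandermonde_id_eq_superFactorial]
    exact superFactorial_dvd_vandermonde_det v

theorem hookProd_eq_div (N : ℕ) (lam : Fin N → ℤ) :
    hookProd N lam = ((vandermonde fun i => (i : ℤ) - lam i).det : ℚ) /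
      ((vandermonde fun i : Fin N => (i : ℤ)).det : ℚ) := by
  rw [hookProd, prod_filter_lt_eq_prod_prod_Ioi fun i j : Fin N =>
      ((lam i : ℚ) - lam j + (j : ℕ) - (i : ℕ)) / ((j : ℕ) - (i : ℕ)),
    det_vandermonde, det_vandermonde]
  push_cast
  simp only [← prod_div_distrib]
  refine prod_congr rfl fun i _ => prod_congr rfl fun j _ => ?_
  ring

theorem stmt_3_general (N : ℕ) (lam : Fin N → ℤ) (hdec : Antitone lam) :
    ∃ d : ℕ, hookProd N lam = (d : ℚ) ∧ 1 ≤ d := by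
  have hv : StrictMono fun i : Fin N => (i : ℤ) - lam i := fun i j hij => by
    have : lam j ≤ lam i := hdec hij.le
    have : (i : ℤ) < j := by exact_mod_cast hij
    dsimp only
    omega
  have hden : 0 < (vandermonde fun i : Fin N => (i : ℤ)).det :=
    det_vandermonde_pos fun i j hij => show (i : ℤ) < j by exact_mod_cast hij
  obtain ⟨d, hd⟩ := det_vandermonde_val_dvd_det_vandermonde fun i => (i : ℤ) - lam i
  have hd_pos : 0 < d := pos_of_mul_pos_right (hd ▸ det_vandermonde_pos hv) hden.le
  refine ⟨d.toNat, ?_, by omega⟩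
  rw [hookProd_eq_div, hd, Int.cast_mul, mul_div_cancel_left₀ _ (by exact_mod_cast hden.ne'),
    ← Int.cast_natCast, Int.toNat_of_nonneg hd_pos.le]

/-- for weakly decreasing `λ` the hook-content product is a
positive integer. -/
theorem stmt_3 (N : ℕ) (hN : 1 ≤ N) (lam : Fin N → ℤ) (hdec : Antitone lam) :
    ∃ d : ℕ, hookProd N lam = (d : ℚ) ∧ 1 ≤ d :=
  stmt_3_general N lam hdec
end

section
/- Let $n \geq 1$, $0 \leq p \leq n-1$, and $t \geq 1$. The set $E = \{\lambda \in \mathbb{Z}^{2n+1} : \lambda \text{ weakly decreasing},\ \lambda_{2p+1} = 2(p-n),\ \lambda_{2i} = \lambda_{2i-1} \text{ for } i \leq p,\ \lambda_{2i} = \lambda_{2i+1} \text{ for } p < i \leq n,\ \lambda_{2n+1} \geq -t-1\}$ is nonempty if and only if $t \geq 2(n-p)-1$. Moreover, $E$ contains a constant tuple if and only if $t \geq 2(n-p)-1$, and in that case the unique constant tuple in $E$ is $(2(p-n))^{2n+1}$. -/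
/-- The set `E ⊆ U^p` indexing irreducibles of `Ext^{2(n-p)+1}(S/Pf^t, S)`. -/
def memEskew (n p t : ℕ) (hp : p ≤ n) (lam : Fin (2 * n + 1) → ℤ) : Prop :=
  Antitone lam ∧
    lam ⟨2 * p, by omega⟩ = 2 * ((p : ℤ) - n) ∧
    (∀ i : ℕ, ∀ _h1 : 1 ≤ i, ∀ _h2 : i ≤ p,
      lam ⟨2 * i - 2, by omega⟩ = lam ⟨2 * i - 1, by omega⟩) ∧
    (∀ i : ℕ, ∀ _h1 : p < i, ∀ _h2 : i ≤ n,
      lam ⟨2 * i - 1, by omega⟩ = lam ⟨2 * i, by omega⟩) ∧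
    -(t : ℤ) - 1 ≤ lam ⟨2 * n, by omega⟩

lemma mem_forward (n p t : ℕ) (hpn : p ≤ n) (lam : Fin (2 * n + 1) → ℤ)
    (h : memEskew n p t hpn lam) : 2 * ((n : ℤ) - p) - 1 ≤ (t : ℤ) := by
  obtain ⟨hanti, hval, -, -, hlb⟩ := h
  have hle : lam ⟨2 * n, by omega⟩ ≤ lam ⟨2 * p, by omega⟩ :=
    hanti (by simp [Fin.le_def]; omega)
  rw [hval] at hle
  omega

lemma const_mem (n p t : ℕ) (hpn : p ≤ n) (h : 2 * ((n : ℤ) - p) - 1 ≤ (t : ℤ)) :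
    memEskew n p t hpn (fun _ => 2 * ((p : ℤ) - n)) := by
  refine ⟨antitone_const, rfl, fun _ _ _ => rfl, fun _ _ _ => rfl, show -(t : ℤ) - 1 ≤ 2 * ((p : ℤ) - n) by omega⟩

/-- `E` is nonempty iff `t ≥ 2(n-p)-1`; it contains a constant
tuple iff `t ≥ 2(n-p)-1`, and the unique constant tuple is `(2(p-n))^{2n+1}`. -/
theorem stmt_13 (n p t : ℕ) (hn : 1 ≤ n) (hp : p ≤ n - 1) (hpn : p ≤ n)
    (ht : 1 ≤ t) :
    ((∃ lam : Fin (2 * n + 1) → ℤ, memEskew n p t hpn lam) ↔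
        2 * ((n : ℤ) - p) - 1 ≤ (t : ℤ)) ∧
      ((∃ lam : Fin (2 * n + 1) → ℤ, memEskew n p t hpn lam ∧
          ∀ i j, lam i = lam j) ↔ 2 * ((n : ℤ) - p) - 1 ≤ (t : ℤ)) ∧
      (∀ lam : Fin (2 * n + 1) → ℤ, memEskew n p t hpn lam →
        (∀ i j, lam i = lam j) → ∀ i, lam i = 2 * ((p : ℤ) - n)) := by
  refine ⟨⟨fun ⟨lam, h⟩ => mem_forward n p t hpn lam h,
      fun h => ⟨_, const_mem n p t hpn h⟩⟩,
    ⟨fun ⟨lam, h, _⟩ => mem_forward n p t hpn lam h,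
      fun h => ⟨_, const_mem n p t hpn h, fun _ _ => rfl⟩⟩,
    fun lam h hc i => ?_⟩
  rw [hc i ⟨2 * p, by omega⟩, h.2.1]
end

section
/- Let $N > k \geq p \geq 0$ be integers and let $\lambda \in \mathbb{Z}^k$ be weakly decreasing with $\lambda_p \geq p - k$ (condition vacuous if $p = 0$). Set $\rho = (N-1, N-2, \ldots, 1, 0)$ and $\gamma = (\lambda_1, \ldots, \lambda_k, 1, 0, \ldots, 0) \in \mathbb{Z}^N$. Then the minimal number of adjacent transpositions needed to sort $\gamma + \rho$ into weakly decreasing order is at most $(N-k)(k-p)$. -/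
/-- with `γ = (λ, 1, 0^{N-k-1})`, the number of inversions of
`γ + ρ` (equivalently, the minimal number of adjacent transpositions sorting it
into weakly decreasing order) is at most `(N-k)(k-p)`. -/
theorem stmt_16 (N k p : ℕ) (hk : k < N) (hpk : p ≤ k)
    (lam : Fin k → ℤ) (hdec : Antitone lam)
    (hup : ∀ i : Fin k, (i : ℕ) < p → (p : ℤ) - k ≤ lam i)
    (gam : Fin N → ℤ)
    (hg1 : ∀ i : Fin N, ∀ h : (i : ℕ) < k, gam i = lam ⟨i, h⟩)
    (hg2 : ∀ i : Fin N, (i : ℕ) = k → gam i = 1)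
    (hg3 : ∀ i : Fin N, k < (i : ℕ) → gam i = 0) :
    (Finset.univ.filter (fun q : Fin N × Fin N => q.1 < q.2 ∧
        gam q.1 + ((N : ℤ) - 1 - (q.1 : ℕ)) <
          gam q.2 + ((N : ℤ) - 1 - (q.2 : ℕ)))).card ≤
      (N - k) * (k - p) := by
  classical
  set T : Finset (Fin N × Fin N) :=
    (Finset.univ.filter fun i : Fin N => p ≤ (i : ℕ) ∧ (i : ℕ) < k) ×ˢ
    (Finset.univ.filter fun j : Fin N => k ≤ (j : ℕ)) with hT
  have hsub : (Finset.univ.filter (fun q : Fin N × Fin N => q.1 < q.2 ∧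
        gam q.1 + ((N : ℤ) - 1 - (q.1 : ℕ)) <
          gam q.2 + ((N : ℤ) - 1 - (q.2 : ℕ)))) ⊆ T := by
    intro q hq
    simp only [Finset.mem_filter, Finset.mem_univ, true_and] at hq
    obtain ⟨hlt, hv⟩ := hq
    have hltn : (q.1 : ℕ) < (q.2 : ℕ) := hlt
    -- first: k ≤ q.2
    have hk2 : k ≤ (q.2 : ℕ) := by
      by_contra h
      push_neg at h
      have h1 : (q.1 : ℕ) < k := lt_trans hltn h
      rw [hg1 q.1 h1, hg1 q.2 h] at hv
      have hmono : lam ⟨q.2, h⟩ ≤ lam ⟨q.1, h1⟩ := hdec (le_of_lt hltn)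
      have : ((q.1 : ℕ) : ℤ) < ((q.2 : ℕ) : ℤ) := by exact_mod_cast hltn
      linarith
    have h1k : (q.1 : ℕ) < k := by
      rcases lt_or_ge (q.1 : ℕ) k with h | h
      · exact h
      · exfalso
        rcases eq_or_lt_of_le h with h' | h'
        · rw [hg2 q.1 h'.symm] at hv
          have h2 : k < (q.2 : ℕ) := by omega
          rw [hg3 q.2 h2] at hv
          have : ((q.1 : ℕ) : ℤ) < ((q.2 : ℕ) : ℤ) := by exact_mod_cast hltn
          linarith
        · rw [hg3 q.1 h'] at hv
          have h2 : k < (q.2 : ℕ) := lt_trans h' hltn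
          rw [hg3 q.2 h2] at hv
          have : ((q.1 : ℕ) : ℤ) < ((q.2 : ℕ) : ℤ) := by exact_mod_cast hltn
          linarith
    have hp1 : p ≤ (q.1 : ℕ) := by
      by_contra h
      push_neg at h
      have hlow : (p : ℤ) - k ≤ lam ⟨q.1, h1k⟩ := hup ⟨q.1, h1k⟩ h
      rw [hg1 q.1 h1k] at hv
      rcases eq_or_lt_of_le hk2 with h2 | h2
      · rw [hg2 q.2 h2.symm] at hv
        have hq2 : ((q.2 : ℕ) : ℤ) = (k : ℤ) := by exact_mod_cast h2.symm
        have hpq : ((q.1 : ℕ) : ℤ) < (p : ℤ) := by exact_mod_cast h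
        linarith
      · rw [hg3 q.2 h2] at hv
        have hpq : ((q.1 : ℕ) : ℤ) < (p : ℤ) := by exact_mod_cast h
        have hkq : (k : ℤ) < ((q.2 : ℕ) : ℤ) := by exact_mod_cast h2
        have hpk' : (p : ℤ) ≤ (k : ℤ) := by exact_mod_cast hpk
        linarith
    simp only [hT, Finset.mem_product, Finset.mem_filter, Finset.mem_univ, true_and]
    exact ⟨⟨hp1, h1k⟩, hk2⟩
  refine le_trans (Finset.card_le_card hsub) ?_
  rw [hT, Finset.card_product]
  have hcard1 : (Finset.univ.filter fun i : Fin N => p ≤ (i : ℕ) ∧ (i : ℕ) < k).card ≤ k - p := by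
    have := Finset.card_le_card_of_injOn (s := Finset.univ.filter fun i : Fin N => p ≤ (i : ℕ) ∧ (i : ℕ) < k) (t := Finset.Ico p k) (fun i : Fin N => (i : ℕ))
      (fun i hi => by
        have hi' := (Finset.mem_filter.1 hi).2
        exact Finset.mem_Ico.2 hi')
      (fun a _ b _ hab => Fin.val_injective hab)
    rw [Nat.card_Ico] at this
    exact this
  have hcard2 : (Finset.univ.filter fun j : Fin N => k ≤ (j : ℕ)).card ≤ N - k := by
    have := Finset.card_le_card_of_injOn (s := Finset.univ.filter fun j : Fin N => k ≤ (j : ℕ)) (t := Finset.Ico k N) (fun j : Fin N => (j : ℕ))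
      (fun j hj => by
        have hj' := (Finset.mem_filter.1 hj).2
        exact Finset.mem_Ico.2 ⟨hj', j.isLt⟩)
      (fun a _ b _ hab => Fin.val_injective hab)
    rw [Nat.card_Ico] at this
    exact this
  calc (Finset.univ.filter fun i : Fin N => p ≤ (i : ℕ) ∧ (i : ℕ) < k).card *
      (Finset.univ.filter fun j : Fin N => k ≤ (j : ℕ)).card
      ≤ (k - p) * (N - k) := Nat.mul_le_mul hcard1 hcard2
    _ = (N - k) * (k - p) := Nat.mul_comm _ _
end

section
/- Let $N > k \geq 1$, $0 \leq p \leq k$, and let $\lambda \in \mathbb{Z}^k$ be weakly decreasing with $\lambda_p \geq p-k$ and $\lambda_{p+1} \leq p-N$ (conditions vacuous for $p=0$, resp. $p=k$). Let $\rho = (N-1, \ldots, 1, 0)$ and $\gamma = (\lambda, 0^{N-k}) = (\lambda_1, \ldots, \lambda_k, 0^{N-k}) \in \mathbb{Z}^N$. Then the tuple $\gamma + \rho$ has pairwise distinct entries, and its number of inversions (pairs $i < j$ with $(\gamma+\rho)_i < (\gamma+\rho)_j$) equals $(N-k)(k-p)$. -/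
/-- with `γ = (λ, 0^{N-k})`, the tuple `γ + ρ` has pairwise
distinct entries and exactly `(N-k)(k-p)` inversions. -/
theorem stmt_17 (N k p : ℕ) (hk0 : 1 ≤ k) (hk : k < N) (hpk : p ≤ k)
    (lam : Fin k → ℤ) (hdec : Antitone lam)
    (hup : ∀ i : Fin k, (i : ℕ) < p → (p : ℤ) - k ≤ lam i)
    (hlow : ∀ i : Fin k, p ≤ (i : ℕ) → lam i ≤ (p : ℤ) - N)
    (gam : Fin N → ℤ)
    (hg1 : ∀ i : Fin N, ∀ h : (i : ℕ) < k, gam i = lam ⟨i, h⟩)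
    (hg2 : ∀ i : Fin N, k ≤ (i : ℕ) → gam i = 0) :
    (∀ i j : Fin N, i ≠ j →
        gam i + ((N : ℤ) - 1 - (i : ℕ)) ≠ gam j + ((N : ℤ) - 1 - (j : ℕ))) ∧
      (Finset.univ.filter (fun q : Fin N × Fin N => q.1 < q.2 ∧
          gam q.1 + ((N : ℤ) - 1 - (q.1 : ℕ)) <
            gam q.2 + ((N : ℤ) - 1 - (q.2 : ℕ)))).card =
        (N - k) * (k - p) := by
  set f : Fin N → ℤ := fun i => gam i + ((N : ℤ) - 1 - (i : ℕ)) with hf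
  -- basic facts about f
  have h1 : ∀ i : Fin N, (i : ℕ) < p → (N : ℤ) - k ≤ f i := by
    intro i hi
    have hik : (i : ℕ) < k := lt_of_lt_of_le hi hpk
    have hl := hup ⟨i, hik⟩ hi
    have hg := hg1 i hik
    have hic : ((i : ℕ) : ℤ) < (p : ℤ) := by exact_mod_cast hi
    simp only [hf, hg]
    linarith
  have h2 : ∀ i : Fin N, p ≤ (i : ℕ) → (i : ℕ) < k → f i < 0 := by
    intro i hpi hik
    have hl := hlow ⟨i, hik⟩ hpi
    have hg := hg1 i hik
    have hic : (p : ℤ) ≤ ((i : ℕ) : ℤ) := by exact_mod_cast hpi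
    simp only [hf, hg]
    linarith
  have h3 : ∀ j : Fin N, k ≤ (j : ℕ) → f j = (N : ℤ) - 1 - (j : ℕ) := by
    intro j hj
    simp only [hf, hg2 j hj, zero_add]
  have h3a : ∀ j : Fin N, k ≤ (j : ℕ) → 0 ≤ f j ∧ f j ≤ (N : ℤ) - 1 - k := by
    intro j hj
    rw [h3 j hj]
    have h1 : ((j : ℕ) : ℤ) < (N : ℤ) := by exact_mod_cast j.isLt
    have h2 : (k : ℤ) ≤ ((j : ℕ) : ℤ) := by exact_mod_cast hj
    constructor <;> linarith
  have h4 : ∀ i j : Fin N, (i : ℕ) < (j : ℕ) → (j : ℕ) < k → f j < f i := by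
    intro i j hij hjk
    have hik : (i : ℕ) < k := lt_trans hij hjk
    have hle : lam ⟨j, hjk⟩ ≤ lam ⟨i, hik⟩ := hdec (by exact_mod_cast hij.le)
    have hic : ((i : ℕ) : ℤ) < ((j : ℕ) : ℤ) := by exact_mod_cast hij
    simp only [hf, hg1 i hik, hg1 j hjk]
    linarith
  have h5 : ∀ i j : Fin N, (i : ℕ) < (j : ℕ) → k ≤ (i : ℕ) → f j < f i := by
    intro i j hij hik
    have hjk : k ≤ (j : ℕ) := le_trans hik hij.le
    rw [h3 i hik, h3 j hjk]
    have hic : ((i : ℕ) : ℤ) < ((j : ℕ) : ℤ) := by exact_mod_cast hij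
    linarith
  have hd : ∀ i j : Fin N, (i : ℕ) < (j : ℕ) → f i ≠ f j := by
    intro i j hij
    by_cases hjk : (j : ℕ) < k
    · exact (h4 i j hij hjk).ne'
    · push_neg at hjk
      by_cases hik : k ≤ (i : ℕ)
      · exact (h5 i j hij hik).ne'
      · push_neg at hik
        by_cases hip : (i : ℕ) < p
        · have hA := h1 i hip
          have hB := (h3a j hjk).2
          have : (k : ℤ) < (N : ℤ) := by exact_mod_cast hk
          intro heq; linarith
        · push_neg at hip
          have hA := h2 i hip hik
          have hB := (h3a j hjk).1
          intro heq; linarith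
  constructor
  · intro i j hne
    rcases lt_trichotomy (i : ℕ) (j : ℕ) with h | h | h
    · exact hd i j h
    · exact absurd (Fin.ext h) hne
    · exact (hd j i h).symm
  · have hset : (Finset.univ.filter (fun q : Fin N × Fin N => q.1 < q.2 ∧
          f q.1 < f q.2)) =
        (Finset.univ.filter (fun i : Fin N => p ≤ (i : ℕ) ∧ (i : ℕ) < k)) ×ˢ
          (Finset.univ.filter (fun j : Fin N => k ≤ (j : ℕ))) := by
      ext ⟨i, j⟩
      simp only [Finset.mem_filter, Finset.mem_product, Finset.mem_univ, true_and]
      constructor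
      · rintro ⟨hij, hfij⟩
        rw [Fin.lt_def] at hij
        by_cases hjk : (j : ℕ) < k
        · exact absurd hfij (not_lt.mpr (h4 i j hij hjk).le)
        · push_neg at hjk
          by_cases hik : k ≤ (i : ℕ)
          · exact absurd hfij (not_lt.mpr (h5 i j hij hik).le)
          · push_neg at hik
            by_cases hip : (i : ℕ) < p
            · have hA := h1 i hip
              have hB := (h3a j hjk).2
              have : (k : ℤ) < (N : ℤ) := by exact_mod_cast hk
              exact absurd hfij (by push_neg; linarith)
            · push_neg at hip
              exact ⟨⟨hip, hik⟩, hjk⟩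
      · rintro ⟨⟨hpi, hik⟩, hkj⟩
        have hij : (i : ℕ) < (j : ℕ) := lt_of_lt_of_le hik hkj
        refine ⟨Fin.lt_def.mpr hij, ?_⟩
        have hA := h2 i hpi hik
        have hB := (h3a j hkj).1
        linarith
    rw [hset, Finset.card_product]
    have cardA : (Finset.univ.filter (fun i : Fin N => p ≤ (i : ℕ) ∧ (i : ℕ) < k)).card
        = k - p := by
      rw [show (Finset.univ.filter (fun i : Fin N => p ≤ (i : ℕ) ∧ (i : ℕ) < k))
          = (Finset.Ico p k).attachFin
            (fun m hm => lt_of_lt_of_le (Finset.mem_Ico.mp hm).2 hk.le) by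
        ext i
        simp [Finset.mem_attachFin, Finset.mem_Ico]]
      rw [Finset.card_attachFin, Nat.card_Ico]
    have cardB : (Finset.univ.filter (fun j : Fin N => k ≤ (j : ℕ))).card = N - k := by
      rw [show (Finset.univ.filter (fun j : Fin N => k ≤ (j : ℕ)))
          = (Finset.Ico k N).attachFin
            (fun m hm => (Finset.mem_Ico.mp hm).2) by
        ext j
        simp [Finset.mem_attachFin, Finset.mem_Ico, j.isLt]]
      rw [Finset.card_attachFin, Nat.card_Ico]
    rw [cardA, cardB, mul_comm]
end
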